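/- arXiv:2206.13825 — 3 statements merged into one kernel-verified Lean document; each statement's English description precedes it below -/
import Mathlib

section
/- Let 𝔤 be a finite-dimensional real Lie algebra carrying a Sasaki structure (φ,ξ,η,g), and suppose the center of 𝔤 is nonzero. Then the center of 𝔤 equals ℝξ. Moreover, the orthogonal complement ξ^⊥ (on which g is nondegenerate since g(ξ,ξ)=1), equipped with the bracket [v,w]ˇ = [v,w] − η([v,w])ξ, is a Lie algebra; the restriction ǧ of g to ξ^⊥, the restriction J of φ to ξ^⊥ (which preserves ξ^⊥), and the restriction ω of Φ to ξ^⊥ form a pseudo-Kähler structure (ǧ,J,ω) on this Lie algebra; and its Ricci tensor řic satisfies řic(v,w) = ric(v,w) + 2g(v,w) for all v,w ∈ ξ^⊥, where ric is the Ricci tensor of (𝔤,g). -/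
open LinearMap Module

noncomputable section

variable {V : Type} [AddCommGroup V] [Module ℝ V] [FiniteDimensional ℝ V]

/-- A Lie bracket on a real vector space, given as a bilinear map. -/
def IsLieBracket (br : V →ₗ[ℝ] V →ₗ[ℝ] V) : Prop :=
  (∀ x y, br x y = - br y x) ∧
    ∀ x y z, br (br x y) z + br (br y z) x + br (br z x) y = 0

/-- Nilpotency of a Lie bracket: iterated adjoint maps of length `n` vanish. -/
def IsNilpotentBracket (br : V →ₗ[ℝ] V →ₗ[ℝ] V) : Prop :=
  ∃ n : ℕ, ∀ l : List V, l.length = n → ∀ x : V,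
    l.foldr (fun v y => br v y) x = 0

/-- The derived series of a bracket. -/
def derivedSeriesB (br : V →ₗ[ℝ] V →ₗ[ℝ] V) : ℕ → Submodule ℝ V
  | 0 => ⊤
  | n + 1 => Submodule.span ℝ
      {x | ∃ a ∈ derivedSeriesB br n, ∃ b ∈ derivedSeriesB br n, x = br a b}

/-- Solvability of a Lie bracket. -/
def IsSolvableBracket (br : V →ₗ[ℝ] V →ₗ[ℝ] V) : Prop :=
  ∃ n, derivedSeriesB br n = ⊥

/-- `D` is a derivation of the bracket `br`. -/
def IsDerivB (br : V →ₗ[ℝ] V →ₗ[ℝ] V) (D : V →ₗ[ℝ] V) : Prop :=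
  ∀ x y, D (br x y) = br (D x) y + br x (D y)

/-- The musical isomorphism `♯` of a nondegenerate bilinear form. -/
def sharp (g : LinearMap.BilinForm ℝ V) (hg : g.Nondegenerate) :
    Module.Dual ℝ V →ₗ[ℝ] V :=
  (LinearMap.BilinForm.toDual g hg).symm.toLinearMap

/-- The adjoint `f*` of an endomorphism with respect to `g` :
`g (f x) y = g x (f* y)` (for symmetric `g`). -/
def adjE (g : LinearMap.BilinForm ℝ V) (hg : g.Nondegenerate)
    (f : V →ₗ[ℝ] V) : V →ₗ[ℝ] V :=
  sharp g hg ∘ₗ ((LinearMap.llcomp ℝ V V ℝ).flip f ∘ₗ g.flip)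

/-- The symmetric part `f^s = (f + f*)/2`. -/
def symPart (g : LinearMap.BilinForm ℝ V) (hg : g.Nondegenerate)
    (f : V →ₗ[ℝ] V) : V →ₗ[ℝ] V := (2:ℝ)⁻¹ • (f + adjE g hg f)

/-- The skew-symmetric part `f^a = (f - f*)/2`. -/
def skewPart (g : LinearMap.BilinForm ℝ V) (hg : g.Nondegenerate)
    (f : V →ₗ[ℝ] V) : V →ₗ[ℝ] V := (2:ℝ)⁻¹ • (f - adjE g hg f)

/-- The endomorphism `A` associated to a bilinear form `β` by `g (A x) y = β x y`. -/
def endoOf (g : LinearMap.BilinForm ℝ V) (hg : g.Nondegenerate)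
    (β : LinearMap.BilinForm ℝ V) : V →ₗ[ℝ] V := sharp g hg ∘ₗ β

/-- The scalar product of two 1-forms: `g(α♯, β♯)`. -/
def inner1 (g : LinearMap.BilinForm ℝ V) (hg : g.Nondegenerate)
    (α β : Module.Dual ℝ V) : ℝ := g (sharp g hg α) (sharp g hg β)

/-- The scalar product of two endomorphisms: `Tr (f ∘ h*)`. -/
def innerEndo (g : LinearMap.BilinForm ℝ V) (hg : g.Nondegenerate)
    (f h : V →ₗ[ℝ] V) : ℝ := trace ℝ V (f ∘ₗ adjE g hg h)

/-- The scalar product of two 2-forms: `(1/2) Tr (A ∘ B*)`. -/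
def inner2 (g : LinearMap.BilinForm ℝ V) (hg : g.Nondegenerate)
    (α β : LinearMap.BilinForm ℝ V) : ℝ :=
  (2:ℝ)⁻¹ * trace ℝ V (endoOf g hg α ∘ₗ adjE g hg (endoOf g hg β))

/-- The 2-form `d(v♭) : (x, y) ↦ - g(v, [x,y])`. -/
def dflat (g : LinearMap.BilinForm ℝ V) (br : V →ₗ[ℝ] V →ₗ[ℝ] V)
    (v : V) : LinearMap.BilinForm ℝ V :=
  - ((LinearMap.llcomp ℝ V V ℝ (g v)) ∘ₗ br)

/-- The Ricci tensor of a metric Lie algebra: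
`2 ric(v,w) = -Tr ad((v⌟dw♭ + w⌟dv♭)♯) + g(dv♭,dw♭) - g(ad v, ad w) - Tr(ad v ∘ ad w)`. -/
def ricci (br : V →ₗ[ℝ] V →ₗ[ℝ] V) (g : LinearMap.BilinForm ℝ V)
    (hg : g.Nondegenerate) (v w : V) : ℝ :=
  (- trace ℝ V (br (sharp g hg (dflat g br w v + dflat g br v w)))
    + inner2 g hg (dflat g br v) (dflat g br w)
    - innerEndo g hg (br v) (br w)
    - trace ℝ V (br v ∘ₗ br w)) / 2

/-- A Sasaki structure `(φ, ξ, η, g)` on a Lie algebra with bracket `br`. -/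
def IsSasaki (br : V →ₗ[ℝ] V →ₗ[ℝ] V) (g : LinearMap.BilinForm ℝ V)
    (φ : V →ₗ[ℝ] V) (ξ : V) (η : Module.Dual ℝ V) : Prop :=
  η ξ = 1 ∧ (∀ x, η (φ x) = 0) ∧ (∀ x, φ (φ x) = - x + η x • ξ) ∧
    g ξ ξ = 1 ∧ (∀ x, η x = g ξ x) ∧
    (∀ x y, g (φ x) (φ y) = g x y - η x * η y) ∧
    (∀ x y, φ (φ (br x y)) + br (φ x) (φ y) - φ (br (φ x) y)
        - φ (br x (φ y)) - η (br x y) • ξ = 0) ∧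
    (∀ x y, - η (br x y) = 2 * g x (φ y))

/-- A pseudo-Kähler structure `(g, J, ω)`, where `ω (x, y) = g (x, J y)`. -/
def IsPseudoKahler (br : V →ₗ[ℝ] V →ₗ[ℝ] V) (g : LinearMap.BilinForm ℝ V)
    (J : V →ₗ[ℝ] V) : Prop :=
  (∀ x, J (J x) = - x) ∧ (∀ x y, g (J x) (J y) = g x y) ∧
    (∀ x y, br (J x) (J y) - J (br (J x) y) - J (br x (J y)) - br x y = 0) ∧
    (∀ x y z, g (br x y) (J z) + g (br y z) (J x) + g (br z x) (J y) = 0)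

end

/-!
Since `dη = 2Φ`, a central element `z` satisfies `g(z, φx) = 0` for all `x`, hence is a multiple
of `ξ`; a nonzero one forces `ξ` itself to be central. With `ξ` central, the projection
`x ↦ x - η(x) ξ` onto `ker η` is `g`-orthogonal and intertwines `[·,·]` with the reduced bracket,
and the trace of an endomorphism `F` of `𝔤` is the trace of its compression to `ker η` plus
`η(F ξ)`. So every term of the Ricci formula descends to `ker η`, except that `g(ad v, ad w)`
picks up `η([v, (ad w)* ξ])`; the Sasaki identities give `(ad w)* ξ = 2 φ w` and
`η([v, φ w]) = 2 g(v, w)`.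
-/

variable {V : Type} [AddCommGroup V] [Module ℝ V]

lemma eq_of_forall_bilin_apply_eq {g : LinearMap.BilinForm ℝ V} (hg : g.Nondegenerate) {a b : V}
    (h : ∀ y, g a y = g b y) : a = b :=
  sub_eq_zero.mp <| hg.1 _ fun y => by simp [h y]

@[simp]
lemma dflat_apply (g : LinearMap.BilinForm ℝ V) (br : V →ₗ[ℝ] V →ₗ[ℝ] V) (v x y : V) :
    dflat g br v x y = -g v (br x y) := by
  simp [dflat]

section MusicalIsomorphisms

variable [FiniteDimensional ℝ V] {g : LinearMap.BilinForm ℝ V} (hg : g.Nondegenerate)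

@[simp]
lemma apply_sharp (α : Module.Dual ℝ V) (y : V) : g (sharp g hg α) y = α y :=
  LinearMap.BilinForm.apply_toDual_symm_apply α y

@[simp]
lemma apply_adjE (f : V →ₗ[ℝ] V) (a x : V) : g (adjE g hg f a) x = g (f x) a := by
  simp [adjE]

@[simp]
lemma apply_endoOf (β : LinearMap.BilinForm ℝ V) (x y : V) :
    g (endoOf g hg β x) y = β x y := by
  simp [endoOf]

end MusicalIsomorphisms

section Compression

variable [FiniteDimensional ℝ V] {W : Type} [AddCommGroup W] [Module ℝ W] [FiniteDimensional ℝ W]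
  (ι : W →ₗ[ℝ] V) (e : V →ₗ[ℝ] W)

lemma trace_eq_trace_compress_add (η : Module.Dual ℝ V) (ξ : V)
    (hdec : ∀ x, ι (e x) + η x • ξ = x) (F : V →ₗ[ℝ] V) :
    trace ℝ V F = trace ℝ W (e ∘ₗ F ∘ₗ ι) + η (F ξ) := by
  have hF : F = (F ∘ₗ ι) ∘ₗ e + η.smulRight (F ξ) := by
    ext x
    conv_lhs => rw [← hdec x]
    simp
  conv_lhs => rw [hF]
  rw [map_add, trace_smulRight, trace_comp_comm']

variable {g : LinearMap.BilinForm ℝ V} (hg : g.Nondegenerate)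
  {gU : LinearMap.BilinForm ℝ W} (hgU : gU.Nondegenerate)

lemma sharp_comp (hge : ∀ a x, g (ι a) x = gU a (e x)) (α : Module.Dual ℝ W) :
    sharp g hg (α ∘ₗ e) = ι (sharp gU hgU α) :=
  eq_of_forall_bilin_apply_eq hg fun y => by simp [hge]

lemma adjE_conj (hge : ∀ a x, g (ι a) x = gU a (e x)) (F : W →ₗ[ℝ] W) :
    adjE g hg (ι ∘ₗ F ∘ₗ e) = ι ∘ₗ adjE gU hgU F ∘ₗ e := by
  ext a
  refine eq_of_forall_bilin_apply_eq hg fun x => ?_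
  simp [hge]

end Compression

section KernelProjection

variable {η : Module.Dual ℝ V} {ξ : V} (hη : η ξ = 1)

def kerProj : V →ₗ[ℝ] ker η :=
  (LinearMap.id - η.smulRight ξ).codRestrict _ fun x => by simp [hη]

lemma coe_kerProj (x : V) : (kerProj hη x : V) = x - η x • ξ := rfl

lemma coe_kerProj_add_smul (x : V) : (kerProj hη x : V) + η x • ξ = x := by
  rw [coe_kerProj, sub_add_cancel]

@[simp]
lemma kerProj_coe (u : ker η) : kerProj hη (u : V) = u :=
  Subtype.ext <| by simp [coe_kerProj, mem_ker.mp u.2]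

lemma kerProj_comp_subtype : kerProj hη ∘ₗ (ker η).subtype = LinearMap.id := by
  ext u; simp

end KernelProjection

section Reduction

variable {br : V →ₗ[ℝ] V →ₗ[ℝ] V} {g : LinearMap.BilinForm ℝ V} {η : Module.Dual ℝ V} {ξ : V}
  {brU : ker η →ₗ[ℝ] ker η →ₗ[ℝ] ker η}
  {gU : LinearMap.BilinForm ℝ (ker η)}

lemma kerProj_br (hη : η ξ = 1) (hξl : ∀ x, br ξ x = 0) (hξr : ∀ x, br x ξ = 0)
    (hbrU : ∀ v w : ker η, (brU v w : V) = br v w - η (br v w) • ξ) (x y : V) :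
    kerProj hη (br x y) = brU (kerProj hη x) (kerProj hη y) := by
  have hxy : br x y = br (kerProj hη x) (kerProj hη y) := by
    conv_lhs => rw [← coe_kerProj_add_smul hη x, ← coe_kerProj_add_smul hη y]
    simp [hξl, hξr]
  exact Subtype.ext <| by rw [hxy, coe_kerProj, hbrU]

lemma apply_coe_eq_apply_kerProj (hsym : ∀ x y, g x y = g y x) (hη : η ξ = 1)
    (hηg : ∀ x, η x = g ξ x) (hgres : ∀ v w : ker η, gU v w = g v w)
    (u : ker η) (x : V) : g u x = gU u (kerProj hη x) := by
  have huξ : g u ξ = 0 := by rw [hsym, ← hηg, mem_ker.mp u.2]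
  conv_lhs => rw [← coe_kerProj_add_smul hη x]
  simp [huξ, hgres]

lemma isLieBracket_reduced (hbr : IsLieBracket br) (hξl : ∀ x, br ξ x = 0)
    (hbrU : ∀ v w : ker η, (brU v w : V) = br v w - η (br v w) • ξ) :
    IsLieBracket brU := by
  obtain ⟨hanti, hjac⟩ := hbr
  refine ⟨fun x y => Subtype.ext ?_, fun x y z => Subtype.ext ?_⟩
  · simp [hbrU, hanti (x : V)]
    abel
  · have hjacη := congrArg η (hjac x y z)
    simp only [map_add, map_zero] at hjacη
    simp only [Submodule.coe_add, hbrU, map_sub, map_smul, LinearMap.sub_apply,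
      LinearMap.smul_apply, hξl, smul_zero, sub_zero, ZeroMemClass.coe_zero]
    linear_combination (norm := module) hjac x y z - hjacη • ξ

lemma nondegenerate_reduced (hg : g.Nondegenerate)
    (hsym : ∀ x y, g x y = g y x) (hη : η ξ = 1) (hηg : ∀ x, η x = g ξ x)
    (hgres : ∀ v w : ker η, gU v w = g v w) : gU.Nondegenerate := by
  have hrefl : gU.IsRefl := fun a b h => by rwa [hgres, hsym, ← hgres]
  refine hrefl.nondegenerate_iff_separatingLeft.mpr fun u hu => Subtype.ext <| hg.1 u fun x => ?_
  rw [apply_coe_eq_apply_kerProj hsym hη hηg hgres, hu]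

end Reduction

section RicciReduction

variable [FiniteDimensional ℝ V] {br : V →ₗ[ℝ] V →ₗ[ℝ] V} {g : LinearMap.BilinForm ℝ V}
  (hg : g.Nondegenerate) {η : Module.Dual ℝ V} {ξ : V}
  {brU : ker η →ₗ[ℝ] ker η →ₗ[ℝ] ker η}
  {gU : LinearMap.BilinForm ℝ (ker η)} (hgU : gU.Nondegenerate)

lemma trace_eq_trace_compress_kerProj (hη : η ξ = 1) (F : V →ₗ[ℝ] V) :
    trace ℝ V F = trace ℝ (ker η) (kerProj hη ∘ₗ F ∘ₗ (ker η).subtype)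
      + η (F ξ) :=
  trace_eq_trace_compress_add (ker η).subtype (kerProj hη) η ξ
    (coe_kerProj_add_smul hη) F

lemma trace_eq_of_kerProj_comp (hη : η ξ = 1) (F : V →ₗ[ℝ] V)
    (FU : ker η →ₗ[ℝ] ker η)
    (hF : kerProj hη ∘ₗ F = FU ∘ₗ kerProj hη) (hFξ : η (F ξ) = 0) :
    trace ℝ V F = trace ℝ (ker η) FU := by
  rw [trace_eq_trace_compress_kerProj hη, hFξ, add_zero, ← LinearMap.comp_assoc, hF,
    LinearMap.comp_assoc, kerProj_comp_subtype, LinearMap.comp_id]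

lemma trace_br_comp_br_reduced (hη : η ξ = 1) (hξr : ∀ x, br x ξ = 0)
    (hbre : ∀ x y, kerProj hη (br x y) = brU (kerProj hη x) (kerProj hη y))
    (v w : ker η) :
    trace ℝ V (br v ∘ₗ br w) = trace ℝ (ker η) (brU v ∘ₗ brU w) :=
  trace_eq_of_kerProj_comp hη _ _ (LinearMap.ext fun x => by simp [hbre]) (by simp [hξr])

lemma trace_br_sharp_reduced (hη : η ξ = 1) (hξr : ∀ x, br x ξ = 0)
    (hge : ∀ (u : ker η) x, g u x = gU u (kerProj hη x))
    (hbre : ∀ x y, kerProj hη (br x y) = brU (kerProj hη x) (kerProj hη y))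
    (v w : ker η) :
    trace ℝ V (br (sharp g hg (dflat g br w v + dflat g br v w)))
      = trace ℝ (ker η) (brU (sharp gU hgU (dflat gU brU w v + dflat gU brU v w))) := by
  have hform : dflat g br w v + dflat g br v w
      = (dflat gU brU w v + dflat gU brU v w) ∘ₗ kerProj hη :=
    LinearMap.ext fun y => by simp [hge, hbre]
  rw [hform, sharp_comp (ker η).subtype _ hg hgU hge]
  exact trace_eq_of_kerProj_comp hη _ _ (LinearMap.ext fun x => by simp [hbre]) (by simp [hξr])

lemma endoOf_dflat_reduced (hη : η ξ = 1)
    (hge : ∀ (u : ker η) x, g u x = gU u (kerProj hη x))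
    (hbre : ∀ x y, kerProj hη (br x y) = brU (kerProj hη x) (kerProj hη y))
    (v : ker η) :
    endoOf g hg (dflat g br v)
      = (ker η).subtype ∘ₗ endoOf gU hgU (dflat gU brU v) ∘ₗ kerProj hη :=
  LinearMap.ext fun x => eq_of_forall_bilin_apply_eq hg fun y => by simp [hge, hbre]

lemma inner2_dflat_reduced (hη : η ξ = 1)
    (hge : ∀ (u : ker η) x, g u x = gU u (kerProj hη x))
    (hbre : ∀ x y, kerProj hη (br x y) = brU (kerProj hη x) (kerProj hη y))
    (v w : ker η) :
    inner2 g hg (dflat g br v) (dflat g br w)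
      = inner2 gU hgU (dflat gU brU v) (dflat gU brU w) := by
  unfold inner2
  rw [endoOf_dflat_reduced hg hgU hη hge hbre, endoOf_dflat_reduced hg hgU hη hge hbre,
    adjE_conj _ _ hg hgU hge]
  congr 1
  exact trace_eq_of_kerProj_comp hη _ _ (LinearMap.ext fun x => by simp) (by simp)

lemma kerProj_comp_adjE_br_comp_subtype (hsym : ∀ x y, g x y = g y x) (hη : η ξ = 1)
    (hge : ∀ (u : ker η) x, g u x = gU u (kerProj hη x))
    (hbre : ∀ x y, kerProj hη (br x y) = brU (kerProj hη x) (kerProj hη y))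
    (w : ker η) :
    kerProj hη ∘ₗ adjE g hg (br w) ∘ₗ (ker η).subtype = adjE gU hgU (brU w) := by
  have hsymU : ∀ a b : ker η, gU a b = gU b a := fun a b => by
    simpa [hge] using hsym a b
  refine LinearMap.ext fun u => eq_of_forall_bilin_apply_eq hgU fun b => ?_
  calc gU (kerProj hη (adjE g hg (br w) u)) b = g (adjE g hg (br w) u) b := by
        rw [hsymU, ← hge, hsym]
    _ = gU (brU w b) u := by rw [apply_adjE, hsym, hge, hbre, kerProj_coe, kerProj_coe, hsymU]
    _ = gU (adjE gU hgU (brU w) u) b := (apply_adjE hgU _ _ _).symm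

lemma innerEndo_br_reduced (hsym : ∀ x y, g x y = g y x) (hη : η ξ = 1)
    (hge : ∀ (u : ker η) x, g u x = gU u (kerProj hη x))
    (hbre : ∀ x y, kerProj hη (br x y) = brU (kerProj hη x) (kerProj hη y))
    (v w : ker η) :
    innerEndo g hg (br v) (br w)
      = innerEndo gU hgU (brU v) (brU w) + η (br v (adjE g hg (br w) ξ)) := by
  unfold innerEndo
  rw [trace_eq_trace_compress_kerProj hη,
    ← kerProj_comp_adjE_br_comp_subtype hg hgU hsym hη hge hbre w]
  congr 2
  exact LinearMap.ext fun u => by simp [hbre]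

lemma ricci_reduced (hsym : ∀ x y, g x y = g y x) (hη : η ξ = 1) (hηg : ∀ x, η x = g ξ x)
    (hξl : ∀ x, br ξ x = 0) (hξr : ∀ x, br x ξ = 0)
    (hbrU : ∀ v w : ker η, (brU v w : V) = br v w - η (br v w) • ξ)
    (hgres : ∀ v w : ker η, gU v w = g v w) (v w : ker η) :
    ricci brU gU hgU v w = ricci br g hg v w + η (br v (adjE g hg (br w) ξ)) / 2 := by
  have hge := apply_coe_eq_apply_kerProj hsym hη hηg hgres
  have hbre := kerProj_br hη hξl hξr hbrU
  unfold ricci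
  rw [trace_br_sharp_reduced hg hgU hη hξr hge hbre, inner2_dflat_reduced hg hgU hη hge hbre,
    innerEndo_br_reduced hg hgU hsym hη hge hbre, trace_br_comp_br_reduced hη hξr hbre]
  ring

end RicciReduction

namespace IsSasaki

variable {br : V →ₗ[ℝ] V →ₗ[ℝ] V} {g : LinearMap.BilinForm ℝ V} {φ : V →ₗ[ℝ] V} {ξ : V}
  {η : Module.Dual ℝ V}

lemma map_xi (hS : IsSasaki br g φ ξ η) : φ ξ = 0 := by
  obtain ⟨hηξ, hηφ, hφφ, -⟩ := hS
  have hφφξ : φ (φ ξ) = 0 := by simp [hφφ, hηξ]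
  simpa [hφφξ, hηφ] using (hφφ (φ ξ)).symm

lemma apply_map_left (hS : IsSasaki br g φ ξ η) (hsym : ∀ x y, g x y = g y x) (x y : V) :
    g (φ x) y = -g x (φ y) := by
  obtain ⟨-, hηφ, hφφ, -, hηg, hgφφ, -⟩ := hS
  have := hgφφ x (φ y)
  simp [hφφ, hηφ, hsym (φ x) ξ, ← hηg] at this
  linarith

lemma eta_br_map_of_eta_eq_zero (hS : IsSasaki br g φ ξ η) {w : V} (hw : η w = 0) (v : V) :
    η (br v (φ w)) = 2 * g v w := by
  obtain ⟨-, -, hφφ, -, -, -, -, hdη⟩ := hS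
  have := hdη v (φ w)
  simp only [hφφ, hw, zero_smul, add_zero, map_neg] at this
  linarith

lemma eta_br_map_map (hS : IsSasaki br g φ ξ η) (hsym : ∀ x y, g x y = g y x) {y : V}
    (hy : η y = 0) (x : V) : η (br (φ x) (φ y)) = η (br x y) := by
  have hskew := hS.apply_map_left hsym x y
  obtain ⟨-, -, hφφ, -, -, -, -, hdη⟩ := hS
  have h := hdη (φ x) (φ y)
  rw [hφφ, hy, zero_smul, add_zero, map_neg, hskew] at h
  linarith [hdη x y]

lemma eq_smul_xi_of_central (hS : IsSasaki br g φ ξ η) (hsym : ∀ x y, g x y = g y x)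
    (hg : g.Nondegenerate) {z : V} (hz : ∀ x, br z x = 0) : z = η z • ξ := by
  obtain ⟨-, -, hφφ, -, hηg, -, -, hdη⟩ := hS
  have hzφ : ∀ x, g z (φ x) = 0 := fun x => by
    have := hdη z x
    rw [hz x, map_zero] at this
    linarith
  refine eq_of_forall_bilin_apply_eq hg fun y => ?_
  have hy : -φ (φ y) + η y • ξ = y := by rw [hφφ]; abel
  conv_lhs => rw [← hy]
  simp only [map_add, map_neg, map_smul, hzφ, LinearMap.smul_apply, smul_eq_mul, hsym z ξ, ← hηg]
  ring

lemma br_xi_left (hS : IsSasaki br g φ ξ η) (hsym : ∀ x y, g x y = g y x)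
    (hg : g.Nondegenerate) (hcenter : ∃ z : V, z ≠ 0 ∧ ∀ x, br z x = 0) (x : V) :
    br ξ x = 0 := by
  obtain ⟨z, hz0, hz⟩ := hcenter
  have hzξ := hS.eq_smul_xi_of_central hsym hg hz
  have hηz : η z ≠ 0 := fun h => hz0 (by rw [hzξ, h, zero_smul])
  have := hz x
  rw [hzξ, map_smul, LinearMap.smul_apply] at this
  exact (smul_eq_zero.mp this).resolve_left hηz

lemma central_iff (hS : IsSasaki br g φ ξ η) (hsym : ∀ x y, g x y = g y x)
    (hg : g.Nondegenerate) (hcenter : ∃ z : V, z ≠ 0 ∧ ∀ x, br z x = 0) (z : V) :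
    (∀ x, br z x = 0) ↔ ∃ c : ℝ, z = c • ξ := by
  refine ⟨fun hz => ⟨η z, hS.eq_smul_xi_of_central hsym hg hz⟩, ?_⟩
  rintro ⟨c, rfl⟩ x
  simp [hS.br_xi_left hsym hg hcenter x]

lemma adjE_br_xi [FiniteDimensional ℝ V] (hS : IsSasaki br g φ ξ η)
    (hsym : ∀ x y, g x y = g y x) (hg : g.Nondegenerate) (w : V) :
    adjE g hg (br w) ξ = (2 : ℝ) • φ w :=
  eq_of_forall_bilin_apply_eq hg fun y => by
    have hskew := hS.apply_map_left hsym w y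
    obtain ⟨-, -, -, -, hηg, -, -, hdη⟩ := hS
    rw [apply_adjE, hsym, ← hηg, map_smul, LinearMap.smul_apply, smul_eq_mul, hskew]
    linarith [hdη w y]

lemma isPseudoKahler_reduced (hS : IsSasaki br g φ ξ η) (hsym : ∀ x y, g x y = g y x)
    (hbr : IsLieBracket br)
    {brU : ker η →ₗ[ℝ] ker η →ₗ[ℝ] ker η}
    (hbrU : ∀ v w : ker η, (brU v w : V) = br v w - η (br v w) • ξ)
    {gU : LinearMap.BilinForm ℝ (ker η)} (hgres : ∀ v w : ker η, gU v w = g v w)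
    {JU : ker η →ₗ[ℝ] ker η} (hJU : ∀ v : ker η, (JU v : V) = φ v) :
    IsPseudoKahler brU gU JU := by
  have hηu (u : ker η) : η u = 0 := u.2
  have hφξ := hS.map_xi
  have hηφφ (x y : ker η) := hS.eta_br_map_map hsym (hηu y) x
  obtain ⟨-, hηφ, hφφ, -, hηg, hgφφ, hN, hdη⟩ := hS
  refine ⟨fun x => Subtype.ext ?_, fun x y => ?_, fun x y => Subtype.ext ?_, fun x y z => ?_⟩
  · simp [hJU, hφφ, hηu]
  · simp [hgres, hJU, hgφφ, hηu]
  · have hNx := hN x y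
    rw [hφφ] at hNx
    simp only [Submodule.coe_sub, hbrU, hJU, map_sub, map_smul, hφξ, smul_zero, sub_zero,
      hηφφ, ZeroMemClass.coe_zero]
    linear_combination (norm := module) hNx
  · have hterm (a b c : ker η) :
        gU (brU a b) (JU c) = -η (br (br a b) c) / 2 := by
      rw [hgres, hbrU, hJU, map_sub, map_smul, LinearMap.sub_apply, LinearMap.smul_apply,
        ← hηg, hηφ, smul_zero, sub_zero]
      linarith [hdη (br a b) c]
    have hjac := congrArg η (hbr.2 x y z)
    simp only [map_add, map_zero] at hjac
    rw [hterm, hterm, hterm]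
    linarith

end IsSasaki

/-- A Sasaki Lie algebra with nonzero center has center `ℝξ`, and the
quotient/orthogonal complement `ξ^⊥` carries a pseudo-Kähler structure whose Ricci
tensor satisfies `řic(v,w) = ric(v,w) + 2 g(v,w)`. -/
theorem sasaki_kahler_quotient
    {V : Type} [AddCommGroup V] [Module ℝ V] [FiniteDimensional ℝ V]
    (br : V →ₗ[ℝ] V →ₗ[ℝ] V) (hbr : IsLieBracket br)
    (g : LinearMap.BilinForm ℝ V) (hsym : ∀ x y, g x y = g y x)
    (hg : g.Nondegenerate)
    (φ : V →ₗ[ℝ] V) (ξ : V) (η : Module.Dual ℝ V)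
    (hS : IsSasaki br g φ ξ η)
    (hcenter : ∃ z : V, z ≠ 0 ∧ ∀ x, br z x = 0) :
    -- the center of 𝔤 equals ℝ ξ
    (∀ z : V, (∀ x, br z x = 0) ↔ ∃ c : ℝ, z = c • ξ) ∧
    -- φ preserves ξ^⊥ = ker η
    (∀ v : V, η v = 0 → η (φ v) = 0) ∧
    -- the reduced structure on ξ^⊥ = ker η
    (∀ (brU : LinearMap.ker η →ₗ[ℝ] LinearMap.ker η →ₗ[ℝ] LinearMap.ker η),
      (∀ v w : LinearMap.ker η,
          (brU v w : V) = br (v : V) w - η (br (v : V) w) • ξ) →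
      ∀ (gU : LinearMap.BilinForm ℝ (LinearMap.ker η)),
      (∀ v w : LinearMap.ker η, gU v w = g (v : V) w) →
      ∀ (JU : LinearMap.ker η →ₗ[ℝ] LinearMap.ker η),
      (∀ v : LinearMap.ker η, (JU v : V) = φ v) →
      -- it is a Lie algebra
      IsLieBracket brU ∧
      -- g is nondegenerate on ξ^⊥
      gU.Nondegenerate ∧
      -- (ǧ, J, ω) is pseudo-Kähler, where ω v w = gU v (JU w) is the restriction of Φ
      IsPseudoKahler brU gU JU ∧
      -- the Ricci tensors are related by řic = ric + 2 g
      (∀ (hgU : gU.Nondegenerate) (v w : LinearMap.ker η),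
        ricci brU gU hgU v w = ricci br g hg (v : V) (w : V) + 2 * g (v : V) w)) := by
  have hηξ : η ξ = 1 := hS.1
  have hηg : ∀ x, η x = g ξ x := hS.2.2.2.2.1
  have hξl := hS.br_xi_left hsym hg hcenter
  have hξr (x : V) : br x ξ = 0 := by rw [hbr.1, hξl, neg_zero]
  refine ⟨hS.central_iff hsym hg hcenter, fun v _ => hS.2.1 v, ?_⟩
  intro brU hbrU gU hgres JU hJU
  refine ⟨isLieBracket_reduced hbr hξl hbrU, nondegenerate_reduced hg hsym hηξ hηg hgres,
    hS.isPseudoKahler_reduced hsym hbr hbrU hgres hJU, fun hgU v w => ?_⟩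
  rw [ricci_reduced hg hgU hsym hηξ hηg hξl hξr hbrU hgres, hS.adjE_br_xi hsym hg, map_smul,
    map_smul, smul_eq_mul, hS.eta_br_map_of_eta_eq_zero w.2]
  ring
end

section
/- Let (ǧ, ǧg, J, ω) be a pseudo-Kähler nilpotent Lie algebra, let Ď be a derivation of ǧ with Ď∘J = J∘Ď, let τ = ±1, and let h ∈ ℝ be a constant such that [Ď^s,Ď^a] = hĎ^s − 2(Ď^s)². Let g̃ = ǧ ⊕ ℝb ⊕ ℝξ ⊕ ℝe₀ with bracket given by [v,w] = [v,w]_ǧ − τ(Ďω)(v,w)b − 2ω(v,w)ξ for v,w ∈ ǧ (where (Ďω)(x,y) = −ω(Ďx,y) − ω(x,Ďy)), [e₀,v] = Ďv for v ∈ ǧ, [e₀,b] = hb − 2τξ, [e₀,ξ] = 0, and b, ξ commuting with ǧ and with each other. Endow g̃ with the symmetric bilinear form g̃ equal to ǧg on ǧ, with g̃(b,b) = τ, g̃(ξ,ξ) = 1, g̃(e₀,e₀) = τ, and ǧ, b, ξ, e₀ mutually orthogonal; set η = g̃(ξ,·) and define φ by φ(v) = Jv for v ∈ ǧ, φ(b)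 = e₀, φ(ξ) = 0, φ(e₀) = −b. Then the bracket satisfies the Jacobi identity (so g̃ is a Lie algebra), (φ,ξ,η,g̃) is a Sasaki structure on g̃, the subspace 𝔤 = ǧ ⊕ ℝb ⊕ ℝξ is a nilpotent ideal orthogonal to e₀, and φ(e₀) lies in the center of 𝔤 (so the decomposition g̃ = 𝔤 ⋊ ℝe₀ is 𝔷-standard). -/
/-!
`g̃` is built in two steps: the central extension `𝔤` of `ǧ` by the closed 2-forms `-τ Ďω`
(along `b`) and `-2ω` (along `ξ`), then the semidirect product `𝔤 ⋊ ℝe₀`, where `e₀` acts by `Ď`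
on `ǧ` and by `b ↦ hb - 2τξ`, `ξ ↦ 0`. The 2-forms are closed because `ω` is and `Ď` is a
derivation, so Jacobi reduces to this action being a derivation of `𝔤`, i.e. to
`Ď(Ďω) = -h Ďω` on the `b`-part and to `τ² = 1` on the `ξ`-part. Pairing the hypothesis on
`Ď`, in the form `Ď² + 2Ď*Ď + Ď*² = h(Ď + Ď*)`, with `ω` gives exactly `Ď(Ďω) = -h Ďω`. The
Sasaki identities hold componentwise by `J² = -1`, `g(J·, J·) = g`, `N_J = 0` and `ĎJ = JĎ`, and
`𝔤` is nilpotent because its bracket only sees `ǧ`-components while `b` and `ξ` are central.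
-/

open LinearMap Module

noncomputable section

variable {V : Type} [AddCommGroup V] [Module ℝ V] [FiniteDimensional ℝ V]

section Forms

variable {E : Type} [AddCommGroup E] [Module ℝ E]

def fundForm (g : LinearMap.BilinForm ℝ E) (J : E →ₗ[ℝ] E) : LinearMap.BilinForm ℝ E :=
  g.compl₂ J

def derivAct (D : E →ₗ[ℝ] E) (β : LinearMap.BilinForm ℝ E) : LinearMap.BilinForm ℝ E :=
  -(β ∘ₗ D) - β.compl₂ D

@[simp] theorem fundForm_apply (g : LinearMap.BilinForm ℝ E) (J : E →ₗ[ℝ] E) (x y : E) :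
    fundForm g J x y = g x (J y) := rfl

@[simp] theorem derivAct_apply (D : E →ₗ[ℝ] E) (β : LinearMap.BilinForm ℝ E) (x y : E) :
    derivAct D β x y = -β (D x) y - β x (D y) := rfl

def IsCocycle (br : E →ₗ[ℝ] E →ₗ[ℝ] E) (β : LinearMap.BilinForm ℝ E) : Prop :=
  ∀ x y z, β (br x y) z + β (br y z) x + β (br z x) y = 0

variable {br : E →ₗ[ℝ] E →ₗ[ℝ] E} {g β : LinearMap.BilinForm ℝ E} {J D : E →ₗ[ℝ] E}

theorem IsCocycle.smul (hβ : IsCocycle br β) (c : ℝ) : IsCocycle br (c • β) := fun x y z => by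
  simp only [LinearMap.smul_apply, smul_eq_mul, ← mul_add, hβ x y z, mul_zero]

theorem IsCocycle.derivAct (hβ : IsCocycle br β) (hD : IsDerivB br D) :
    IsCocycle br (derivAct D β) := fun x y z => by
  simp only [derivAct_apply, hD x y, hD y z, hD z x, map_add, LinearMap.add_apply]
  linear_combination -hβ (D x) y z - hβ x (D y) z - hβ x y (D z)

theorem LinearMap.BilinForm.IsAlt.derivAct (hβ : β.IsAlt) (D : E →ₗ[ℝ] E) :
    (derivAct D β).IsAlt := fun x => by
  simp [← hβ.neg_eq (D x) x]

theorem IsPseudoKahler.g_J_left (hpk : IsPseudoKahler br g J) (x y : E) :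
    g (J x) y = -g x (J y) := by
  have := hpk.2.1 x (J y)
  rw [hpk.1, map_neg] at this
  linarith

theorem IsPseudoKahler.isAlt_fundForm (hpk : IsPseudoKahler br g J)
    (hsym : ∀ x y, g x y = g y x) : (fundForm g J).IsAlt := fun x => by
  have := hpk.g_J_left x x
  rw [hsym] at this
  simp only [fundForm_apply]
  linarith

theorem IsPseudoKahler.isCocycle_fundForm (hpk : IsPseudoKahler br g J) :
    IsCocycle br (fundForm g J) :=
  hpk.2.2.2

theorem adjE_apply_left [FiniteDimensional ℝ E] (hg : g.Nondegenerate) (f : E →ₗ[ℝ] E) (x y : E) :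
    g (adjE g hg f x) y = g (f y) x := by
  simp [adjE, sharp]

theorem sq_add_two_adjE_mul_add_adjE_sq [FiniteDimensional ℝ E] (hg : g.Nondegenerate) {h : ℝ}
    (hcomm : symPart g hg D ∘ₗ skewPart g hg D - skewPart g hg D ∘ₗ symPart g hg D
      = h • symPart g hg D - (2:ℝ) • (symPart g hg D ∘ₗ symPart g hg D)) (v : E) :
    D (D v) + (2:ℝ) • adjE g hg D (D v) + adjE g hg D (adjE g hg D v)
      = h • (D v + adjE g hg D v) := by
  have := LinearMap.congr_fun hcomm v
  simp only [symPart, skewPart, LinearMap.sub_apply, LinearMap.comp_apply, LinearMap.smul_apply,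
    LinearMap.add_apply, map_add, map_sub, map_smul] at this
  linear_combination (norm := module) (2 : ℝ) • this

theorem derivAct_derivAct_fundForm [FiniteDimensional ℝ E] (hsym : ∀ x y, g x y = g y x)
    (hg : g.Nondegenerate) (hDJ : D ∘ₗ J = J ∘ₗ D) {h : ℝ}
    (hcomm : symPart g hg D ∘ₗ skewPart g hg D - skewPart g hg D ∘ₗ symPart g hg D
      = h • symPart g hg D - (2:ℝ) • (symPart g hg D ∘ₗ symPart g hg D)) :
    derivAct D (derivAct D (fundForm g J)) = (-h) • derivAct D (fundForm g J) := by
  have hDJ' : ∀ v, D (J v) = J (D v) := LinearMap.congr_fun hDJ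
  have hadj : ∀ x y, g (adjE g hg D x) (J y) = g x (J (D y)) := fun x y => by
    rw [adjE_apply_left, hDJ', hsym]
  ext x y
  have key := congrArg (g · (J y)) (sq_add_two_adjE_mul_add_adjE_sq hg hcomm x)
  simp only [map_add, map_smul, LinearMap.add_apply, LinearMap.smul_apply, smul_eq_mul,
    hadj] at key
  simp only [derivAct_apply, fundForm_apply, LinearMap.smul_apply, smul_eq_mul]
  linear_combination key

end Forms

section Extensions

variable {E U : Type} [AddCommGroup E] [Module ℝ E] [AddCommGroup U] [Module ℝ U]

def centralExtBr (br : E →ₗ[ℝ] E →ₗ[ℝ] E) (α β : LinearMap.BilinForm ℝ E) :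
    (E × ℝ × ℝ) →ₗ[ℝ] (E × ℝ × ℝ) →ₗ[ℝ] (E × ℝ × ℝ) :=
  LinearMap.mk₂ ℝ (fun u v => (br u.1 v.1, α u.1 v.1, β u.1 v.1))
    (fun _ _ _ => by simp) (fun _ _ _ => by simp) (fun _ _ _ => by simp) (fun _ _ _ => by simp)

@[simp] theorem centralExtBr_apply (br : E →ₗ[ℝ] E →ₗ[ℝ] E) (α β : LinearMap.BilinForm ℝ E)
    (u v : E × ℝ × ℝ) : centralExtBr br α β u v = (br u.1 v.1, α u.1 v.1, β u.1 v.1) := rfl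

def semidirectBr (br : U →ₗ[ℝ] U →ₗ[ℝ] U) (D : U →ₗ[ℝ] U) :
    (U × ℝ) →ₗ[ℝ] (U × ℝ) →ₗ[ℝ] (U × ℝ) :=
  LinearMap.mk₂ ℝ (fun p q => (br p.1 q.1 + p.2 • D q.1 - q.2 • D p.1, 0))
    (fun _ _ _ => Prod.ext (by simp; module) (by simp))
    (fun _ _ _ => Prod.ext (by simp; module) (by simp))
    (fun _ _ _ => Prod.ext (by simp; module) (by simp))
    (fun _ _ _ => Prod.ext (by simp; module) (by simp))

@[simp] theorem semidirectBr_apply (br : U →ₗ[ℝ] U →ₗ[ℝ] U) (D : U →ₗ[ℝ] U) (p q : U × ℝ) :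
    semidirectBr br D p q = (br p.1 q.1 + p.2 • D q.1 - q.2 • D p.1, 0) := rfl

theorem IsLieBracket.centralExtBr {br : E →ₗ[ℝ] E →ₗ[ℝ] E} (hbr : IsLieBracket br)
    {α β : LinearMap.BilinForm ℝ E} (hα : α.IsAlt) (hβ : β.IsAlt)
    (hαc : IsCocycle br α) (hβc : IsCocycle br β) : IsLieBracket (centralExtBr br α β) := by
  refine ⟨fun u v => ?_, fun u v w => ?_⟩
  · simp [hbr.1 u.1 v.1, ← hα.neg_eq u.1 v.1, ← hβ.neg_eq u.1 v.1]
  · simp [hbr.2 u.1 v.1 w.1, hαc u.1 v.1 w.1, hβc u.1 v.1 w.1]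

theorem IsDerivB.centralExtBr_prodMap {br : E →ₗ[ℝ] E →ₗ[ℝ] E} {D : E →ₗ[ℝ] E}
    (hD : IsDerivB br D) {α β : LinearMap.BilinForm ℝ E} (M : ℝ × ℝ →ₗ[ℝ] ℝ × ℝ)
    (hM : ∀ x y, M (α x y, β x y) = (α (D x) y + α x (D y), β (D x) y + β x (D y))) :
    IsDerivB (centralExtBr br α β) (D.prodMap M) := fun u v => by
  simp [hD u.1 v.1, hM]

theorem IsLieBracket.semidirectBr {br : U →ₗ[ℝ] U →ₗ[ℝ] U} (hbr : IsLieBracket br)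
    {D : U →ₗ[ℝ] U} (hD : IsDerivB br D) : IsLieBracket (semidirectBr br D) := by
  refine ⟨fun p q => ?_, fun ⟨u, s⟩ ⟨v, t⟩ ⟨w, m⟩ => ?_⟩
  · ext
    · simp only [semidirectBr_apply, Prod.fst_neg]
      linear_combination (norm := module) hbr.1 p.1 q.1
    · simp
  · ext
    · simp only [semidirectBr_apply, map_add, map_sub, map_smul, LinearMap.add_apply,
        LinearMap.sub_apply, LinearMap.smul_apply, zero_smul, Prod.fst_add, Prod.fst_zero]
      linear_combination (norm := module) hbr.2 u v w - m • hD u v - s • hD v w - t • hD w u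
        - m • hbr.1 (D v) u - s • hbr.1 (D w) v - t • hbr.1 (D u) w
    · simp

theorem IsNilpotentBracket.of_fst {A : Type} [AddCommGroup A] [Module ℝ A]
    {br : E →ₗ[ℝ] E →ₗ[ℝ] E} (hnil : IsNilpotentBracket br)
    (brG : (E × A) →ₗ[ℝ] (E × A) →ₗ[ℝ] (E × A))
    (hfst : ∀ u v, (brG u v).1 = br u.1 v.1) (hcentral : ∀ u v, v.1 = 0 → brG u v = 0) :
    IsNilpotentBracket brG := by
  obtain ⟨n, hn⟩ := hnil
  have hfold : ∀ (l : List (E × A)) x,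
      (l.foldr (fun v y => brG v y) x).1 = (l.map Prod.fst).foldr (fun v y => br v y) x.1 := by
    intro l x
    induction l with
    | nil => rfl
    | cons u l ih => simp only [List.foldr_cons, List.map_cons, hfst, ih]
  refine ⟨n + 1, fun l hl x => ?_⟩
  obtain ⟨u, l, rfl⟩ := List.exists_cons_of_length_eq_add_one hl
  exact hcentral u _ ((hfold l x).trans (hn _ (by simpa using hl) x.1))

end Extensions

section ZStandard

variable {E : Type} [AddCommGroup E] [Module ℝ E]

def e0Act (τ h : ℝ) : ℝ × ℝ →ₗ[ℝ] ℝ × ℝ :=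
  (h • LinearMap.fst ℝ ℝ ℝ).prod ((-2 * τ) • LinearMap.fst ℝ ℝ ℝ)

@[simp] theorem e0Act_apply (τ h : ℝ) (p : ℝ × ℝ) : e0Act τ h p = (h * p.1, -2 * τ * p.1) := rfl

/-- The bracket of `g̃` in coordinates `((v, b, ξ), e₀)`. -/
def zStdBracket (br : E →ₗ[ℝ] E →ₗ[ℝ] E) (g : LinearMap.BilinForm ℝ E) (J D : E →ₗ[ℝ] E)
    (τ h : ℝ) : ((E × ℝ × ℝ) × ℝ) →ₗ[ℝ] ((E × ℝ × ℝ) × ℝ) →ₗ[ℝ] ((E × ℝ × ℝ) × ℝ) :=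
  semidirectBr (centralExtBr br (-τ • derivAct D (fundForm g J)) ((-2 : ℝ) • fundForm g J))
    (D.prodMap (e0Act τ h))

variable {br : E →ₗ[ℝ] E →ₗ[ℝ] E} {g : LinearMap.BilinForm ℝ E} {J D : E →ₗ[ℝ] E} {τ h : ℝ}

theorem zStdBracket_apply (p q : (E × ℝ × ℝ) × ℝ) :
    zStdBracket br g J D τ h p q = ((br p.1.1 q.1.1 + p.2 • D q.1.1 - q.2 • D p.1.1,
      -τ * (-g (D p.1.1) (J q.1.1) - g p.1.1 (J (D q.1.1)))
        + p.2 * (h * q.1.2.1) - q.2 * (h * p.1.2.1),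
      -2 * g p.1.1 (J q.1.1) + p.2 * (-2 * τ * q.1.2.1) - q.2 * (-2 * τ * p.1.2.1)), 0) := by
  simp only [zStdBracket, semidirectBr_apply, centralExtBr_apply, LinearMap.prodMap_apply,
    e0Act_apply, derivAct_apply, fundForm_apply, LinearMap.smul_apply, smul_eq_mul,
    Prod.smul_mk, Prod.mk_add_mk, Prod.mk_sub_mk]

theorem isLieBracket_zStdBracket [FiniteDimensional ℝ E] (hbr : IsLieBracket br)
    (hsym : ∀ x y, g x y = g y x) (hg : g.Nondegenerate) (hpk : IsPseudoKahler br g J)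
    (hD : IsDerivB br D) (hDJ : D ∘ₗ J = J ∘ₗ D) (hτ : τ * τ = 1)
    (hcomm : symPart g hg D ∘ₗ skewPart g hg D - skewPart g hg D ∘ₗ symPart g hg D
      = h • symPart g hg D - (2:ℝ) • (symPart g hg D ∘ₗ symPart g hg D)) :
    IsLieBracket (zStdBracket br g J D τ h) := by
  have hω := hpk.isAlt_fundForm hsym
  have hωc := hpk.isCocycle_fundForm
  refine (hbr.centralExtBr ((hω.derivAct D).smul _) (hω.smul _) ((hωc.derivAct hD).smul _)
    (hωc.smul _)).semidirectBr (hD.centralExtBr_prodMap _ fun x y => ?_)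
  have hDω := LinearMap.congr_fun₂ (derivAct_derivAct_fundForm hsym hg hDJ hcomm) x y
  simp only [derivAct_apply, fundForm_apply, LinearMap.smul_apply, smul_eq_mul] at hDω
  simp only [e0Act_apply, derivAct_apply, fundForm_apply, LinearMap.smul_apply, smul_eq_mul,
    Prod.mk.injEq]
  constructor
  · linear_combination -τ * hDω
  · linear_combination (-2 * (g (D x) (J y) + g x (J (D y)))) * hτ

theorem isSasaki_zStdBracket (hpk : IsPseudoKahler br g J) (hDJ : D ∘ₗ J = J ∘ₗ D) (τ h : ℝ)
    (gW : LinearMap.BilinForm ℝ ((E × ℝ × ℝ) × ℝ))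
    (hgW : ∀ p q : (E × ℝ × ℝ) × ℝ,
      gW p q = g p.1.1 q.1.1 + τ * p.1.2.1 * q.1.2.1 + p.1.2.2 * q.1.2.2 + τ * p.2 * q.2)
    (φ : ((E × ℝ × ℝ) × ℝ) →ₗ[ℝ] ((E × ℝ × ℝ) × ℝ))
    (hφ : ∀ p : (E × ℝ × ℝ) × ℝ, φ p = ((J p.1.1, - p.2, 0), p.1.2.1)) :
    IsSasaki (zStdBracket br g J D τ h) gW φ (((0:E), (0:ℝ), (1:ℝ)), (0:ℝ))
      (gW (((0:E), (0:ℝ), (1:ℝ)), (0:ℝ))) := by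
  have hDJ' : ∀ v, D (J v) = J (D v) := LinearMap.congr_fun hDJ
  have hη : ∀ q : (E × ℝ × ℝ) × ℝ, gW (((0:E), (0:ℝ), (1:ℝ)), (0:ℝ)) q = q.1.2.2 := fun q => by
    simp [hgW]
  refine ⟨by simp [hη], fun x => by simp [hη, hφ], fun x => ?_, by simp [hη], fun x => rfl,
    fun x y => ?_, fun x y => ?_, fun x y => ?_⟩
  · simp [hφ, hη, hpk.1, Prod.ext_iff]
  · rw [hη, hη, hgW, hgW, hφ, hφ]
    simp only [hpk.2.1]
    ring
  · obtain ⟨⟨v, a, c⟩, s⟩ := x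
    obtain ⟨⟨w, b, d⟩, t⟩ := y
    simp only [zStdBracket_apply, hφ, hη, hDJ', hpk.1, map_add, map_sub, map_smul, map_neg,
      Prod.mk_add_mk, Prod.mk_sub_mk, Prod.smul_mk, smul_eq_mul, Prod.ext_iff, Prod.fst_zero,
      Prod.snd_zero]
    refine ⟨⟨?_, ?_, ?_⟩, ?_⟩
    · linear_combination (norm := module) hpk.2.2.1 v w
    · linear_combination -τ * hpk.g_J_left (D v) w - τ * hpk.g_J_left v (D w)
    · linear_combination 2 * hpk.g_J_left v w
    · linear_combination -τ * hpk.2.1 (D v) w - τ * hpk.2.1 v (D w)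
  · rw [hη, zStdBracket_apply, hφ, hgW]
    ring

theorem nondegenerate_zStdMetric [FiniteDimensional ℝ E] (hg : g.Nondegenerate) (hτ : τ ≠ 0)
    (gW : LinearMap.BilinForm ℝ ((E × ℝ × ℝ) × ℝ))
    (hgW : ∀ p q : (E × ℝ × ℝ) × ℝ,
      gW p q = g p.1.1 q.1.1 + τ * p.1.2.1 * q.1.2.1 + p.1.2.2 * q.1.2.2 + τ * p.2 * q.2) :
    gW.Nondegenerate := by
  refine LinearMap.BilinForm.Nondegenerate.ofSeparatingLeft fun ⟨⟨v, a, c⟩, s⟩ hp => ?_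
  have hv : v = 0 := hg.1 v fun x => by simpa [hgW] using hp ((x, 0, 0), 0)
  have ha : a = 0 := by simpa [hgW, hτ] using hp ((0, 1, 0), 0)
  have hc : c = 0 := by simpa [hgW] using hp ((0, 0, 1), 0)
  have hs : s = 0 := by simpa [hgW, hτ] using hp ((0, 0, 0), 1)
  simp [hv, ha, hc, hs]

end ZStandard

/-- the construction of a `𝔷`-standard Sasaki Lie algebra
`g̃ = (ǧ ⊕ ℝb ⊕ ℝξ) ⋊ ℝe₀` from a pseudo-Kähler nilpotent Lie algebra with a
derivation `Ď` commuting with `J` and satisfying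
`[Ď^s, Ď^a] = h Ď^s - 2 (Ď^s)²`. -/
theorem z_standard_sasaki_construction
    {V : Type} [AddCommGroup V] [Module ℝ V] [FiniteDimensional ℝ V]
    (br : V →ₗ[ℝ] V →ₗ[ℝ] V) (hbr : IsLieBracket br)
    (hnil : IsNilpotentBracket br)
    (g : LinearMap.BilinForm ℝ V) (hsym : ∀ x y, g x y = g y x)
    (hg : g.Nondegenerate)
    (J : V →ₗ[ℝ] V) (hpk : IsPseudoKahler br g J)
    (D : V →ₗ[ℝ] V) (hD : IsDerivB br D) (hDJ : D ∘ₗ J = J ∘ₗ D)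
    (τ : ℝ) (hτ : τ = 1 ∨ τ = -1)
    (h : ℝ)
    (hcomm : symPart g hg D ∘ₗ skewPart g hg D - skewPart g hg D ∘ₗ symPart g hg D
      = h • symPart g hg D - (2:ℝ) • (symPart g hg D ∘ₗ symPart g hg D))
    -- g̃ = (ǧ ⊕ ℝb ⊕ ℝξ) ⋊ ℝe₀; coordinates ((v, b-comp, ξ-comp), e₀-comp);
    -- [v,w] = [v,w]_ǧ - τ(Ďω)(v,w) b - 2ω(v,w) ξ, [e₀,v] = Ďv, [e₀,b] = hb - 2τξ
    (brW : ((V × ℝ × ℝ) × ℝ) →ₗ[ℝ] ((V × ℝ × ℝ) × ℝ) →ₗ[ℝ] ((V × ℝ × ℝ) × ℝ))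
    (hbrW : ∀ p q : (V × ℝ × ℝ) × ℝ,
      brW p q = ((br p.1.1 q.1.1 + p.2 • D q.1.1 - q.2 • D p.1.1,
        - τ * (- g (D p.1.1) (J q.1.1) - g p.1.1 (J (D q.1.1)))
          + p.2 * (h * q.1.2.1) - q.2 * (h * p.1.2.1),
        - 2 * g p.1.1 (J q.1.1)
          + p.2 * (- 2 * τ * q.1.2.1) - q.2 * (- 2 * τ * p.1.2.1)), 0))
    (gW : LinearMap.BilinForm ℝ ((V × ℝ × ℝ) × ℝ))
    (hgW : ∀ p q : (V × ℝ × ℝ) × ℝ,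
      gW p q = g p.1.1 q.1.1 + τ * p.1.2.1 * q.1.2.1 + p.1.2.2 * q.1.2.2
        + τ * p.2 * q.2)
    -- φ(v) = Jv, φ(b) = e₀, φ(ξ) = 0, φ(e₀) = -b
    (φ : ((V × ℝ × ℝ) × ℝ) →ₗ[ℝ] ((V × ℝ × ℝ) × ℝ))
    (hφ : ∀ p : (V × ℝ × ℝ) × ℝ, φ p = ((J p.1.1, - p.2, 0), p.1.2.1)) :
    -- the bracket satisfies the Jacobi identity
    IsLieBracket brW ∧
    -- g̃ is nondegenerate
    gW.Nondegenerate ∧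
    -- (φ, ξ, η, g̃) is a Sasaki structure, with ξ = ((0,0,1),0), η = g̃(ξ,·)
    IsSasaki brW gW φ (((0:V), (0:ℝ), (1:ℝ)), (0:ℝ))
      (gW (((0:V), (0:ℝ), (1:ℝ)), (0:ℝ))) ∧
    -- the bracket takes values in 𝔤 = ǧ ⊕ ℝb ⊕ ℝξ = {p | p.2 = 0}, so 𝔤 is an ideal
    (∀ p q : (V × ℝ × ℝ) × ℝ, (brW p q).2 = 0) ∧
    -- 𝔤, i.e. the central extension of ǧ by b and ξ, is nilpotent
    (∀ brG : (V × ℝ × ℝ) →ₗ[ℝ] (V × ℝ × ℝ) →ₗ[ℝ] (V × ℝ × ℝ),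
      (∀ u v : V × ℝ × ℝ,
        brG u v = (br u.1 v.1,
          - τ * (- g (D u.1) (J v.1) - g u.1 (J (D v.1))),
          - 2 * g u.1 (J v.1))) →
      IsNilpotentBracket brG) ∧
    -- 𝔤 is orthogonal to e₀
    (∀ p : (V × ℝ × ℝ) × ℝ, p.2 = 0 → gW p (((0:V), (0:ℝ), (0:ℝ)), (1:ℝ)) = 0) ∧
    -- φ(e₀) = -b lies in the center of 𝔤
    (∀ q : (V × ℝ × ℝ) × ℝ, q.2 = 0 →
      brW (((0:V), (-1:ℝ), (0:ℝ)), (0:ℝ)) q = 0) := by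
  have hτ2 : τ * τ = 1 := by rcases hτ with rfl | rfl <;> norm_num
  obtain rfl : brW = zStdBracket br g J D τ h :=
    LinearMap.ext₂ fun p q => (hbrW p q).trans (zStdBracket_apply p q).symm
  refine ⟨isLieBracket_zStdBracket hbr hsym hg hpk hD hDJ hτ2 hcomm,
    nondegenerate_zStdMetric hg (by rintro rfl; simp at hτ2) gW hgW,
    isSasaki_zStdBracket hpk hDJ τ h gW hgW φ hφ, fun p q => rfl,
    fun brG hbrG => hnil.of_fst brG (fun u v => by rw [hbrG]) (fun u v hv => by simp [hbrG, hv]),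
    fun p hp => by simp [hgW, hp], fun q hq => by simp [zStdBracket, hq]⟩
end
end

section
/- Let 𝔥₁₁ be the 6-dimensional nilpotent real Lie algebra with basis e₁,…,e₆ and nonzero brackets [e₁,e₂] = e₄, [e₁,e₃] = e₅, [e₁,e₄] = e₆, [e₂,e₃] = −e₆ (and their antisymmetric counterparts). Fix a ∈ ℝ, a ≠ 0, and define the endomorphism J of 𝔥₁₁ by J e₁ = (1/a)e₂, J e₂ = −a e₁, J e₃ = (3/(2a))e₄ + (3/a)e₅, J e₄ = −(2a/3)e₃ − (1/a)e₆, J e₅ = (1/(2a))e₆, J e₆ = −2a e₅ (so J² = −id); let ω = e^{16} + e^{24} − (1/2)e^{25} + (1/2)e^{34}, where {eⁱ} is the dual basis and e^{ij} = eⁱ∧eʲ, and let g be the bilinear form g(x,y) = −ω(x,Jy). Then g is symmetric and nondegenerate, and there exists no derivation D of 𝔥₁₁ satisfying D∘J = J∘D and D + D* = 2·id, where D* denotes the adjoint of D with respect to g. -/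
open LinearMap Module

noncomputable section

variable {V : Type} [AddCommGroup V] [Module ℝ V] [FiniteDimensional ℝ V]

/-!
All data are pinned down by their values on the basis, so `br`, `ω`, `J` and `g` are explicit
coordinate models; the Gram matrix of `g = -ω(·, J·)` is symmetric and invertible.
Write `dᵢⱼ` for the `eᵢ`-coordinate of `D eⱼ`. The derivation rule on `[e₁,e₂]` and `[e₁,e₃]`,
the commutation `DJ = JD` on `e₁` and `e₃`, and `g(Dx,y) + g(x,Dy) = 2 g(x,y)` on `(e₂,e₃)` force
`d₁₁ = 0`; the last identity on `(e₁,e₄)` then reads `0 = 2/a`.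
-/

open Matrix

-- `𝐞 i` is the basis vector called `e_{i+1}` in the statement.
local notation "𝐞" i => (Pi.single i (1 : ℝ) : Fin 6 → ℝ)

theorem LinearMap.ext_of_antisymm {K ι M : Type*} [Field K] [NeZero (2 : K)] [LinearOrder ι]
    [Finite ι] [AddCommGroup M] [Module K M] {B B' : (ι → K) →ₗ[K] (ι → K) →ₗ[K] M}
    (hB : ∀ x y, B x y = -B y x) (hB' : ∀ x y, B' x y = -B' y x)
    (h : ∀ i j, i < j → B (Pi.single i 1) (Pi.single j 1) = B' (Pi.single i 1) (Pi.single j 1)) :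
    B = B' := by
  have diag {C : (ι → K) →ₗ[K] (ι → K) →ₗ[K] M} (hC : ∀ x y, C x y = -C y x) (x) : C x x = 0 := by
    have h2 : (2 : K) • C x x = 0 := by rw [two_smul]; nth_rewrite 1 [hC]; exact neg_add_cancel _
    exact (smul_eq_zero.mp h2).resolve_left two_ne_zero
  refine (Pi.basisFun K ι).ext fun i => (Pi.basisFun K ι).ext fun j => ?_
  simp only [Pi.basisFun_apply]
  rcases lt_trichotomy i j with hij | rfl | hji
  · exact h i j hij
  · rw [diag hB, diag hB']
  · rw [hB, hB', h j i hji]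

theorem LinearMap.apply_add_apply_eq_of_add_adjoint {R M : Type*} [CommSemiring R]
    [AddCommMonoid M] [Module R M] {g : LinearMap.BilinForm R M} {D D' : M →ₗ[R] M} (c : R)
    (hadj : ∀ x y, g (D x) y = g x (D' y)) (hsum : D + D' = c • LinearMap.id) (x y : M) :
    g (D x) y + g x (D y) = c * g x y := by
  rw [hadj, ← map_add, add_comm, ← LinearMap.add_apply, hsum]
  simp

def wedge {n : ℕ} (i j : Fin n) : LinearMap.BilinForm ℝ (Fin n → ℝ) :=
  BilinForm.linMulLin (proj i) (proj j) - BilinForm.linMulLin (proj j) (proj i)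

@[simp] lemma wedge_apply {n : ℕ} (i j : Fin n) (x y : Fin n → ℝ) :
    wedge i j x y = x i * y j - x j * y i := rfl

def h11Bracket : (Fin 6 → ℝ) →ₗ[ℝ] (Fin 6 → ℝ) →ₗ[ℝ] (Fin 6 → ℝ) :=
  (wedge 0 1).compr₂ (toSpanSingleton ℝ _ (𝐞 3)) + (wedge 0 2).compr₂ (toSpanSingleton ℝ _ (𝐞 4))
    + (wedge 0 3 - wedge 1 2).compr₂ (toSpanSingleton ℝ _ (𝐞 5))

lemma h11Bracket_antisymm (x y : Fin 6 → ℝ) : h11Bracket x y = -h11Bracket y x := by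
  funext k
  simp only [h11Bracket, LinearMap.add_apply, LinearMap.sub_apply, compr₂_apply, wedge_apply,
    toSpanSingleton_apply, Pi.add_apply, Pi.smul_apply, smul_eq_mul, Pi.neg_apply]
  ring

def h11Omega : LinearMap.BilinForm ℝ (Fin 6 → ℝ) :=
  wedge 0 5 + wedge 1 3 - (1/2 : ℝ) • wedge 1 4 + (1/2 : ℝ) • wedge 2 3

lemma h11Omega_antisymm (x y : Fin 6 → ℝ) : h11Omega x y = -h11Omega y x := by
  simp only [h11Omega, LinearMap.add_apply, LinearMap.sub_apply, LinearMap.smul_apply, wedge_apply,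
    smul_eq_mul]
  ring

def h11J (a : ℝ) : Matrix (Fin 6) (Fin 6) ℝ :=
  !![0, -a, 0, 0, 0, 0;
     a⁻¹, 0, 0, 0, 0, 0;
     0, 0, 0, -(2*a/3), 0, 0;
     0, 0, 3/(2*a), 0, 0, 0;
     0, 0, 3/a, 0, 0, -(2*a);
     0, 0, 0, -a⁻¹, 1/(2*a), 0]

def h11Gram (a : ℝ) : Matrix (Fin 6) (Fin 6) ℝ :=
  !![0, 0, 0, 1/a, -1/(2*a), 0;
     0, 0, 0, 0, 0, -a;
     0, 0, -3/(4*a), 0, 0, 0;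
     1/a, 0, 0, -a/3, 0, 0;
     -1/(2*a), 0, 0, 0, 0, 0;
     0, -a, 0, 0, 0, 0]

lemma neg_h11Omega_h11J {a : ℝ} (ha : a ≠ 0) (x y : Fin 6 → ℝ) :
    -h11Omega x (toLin' (h11J a) y) = toBilin' (h11Gram a) x y := by
  simp [h11Omega, h11J, h11Gram, toBilin'_apply', mulVec, dotProduct, Fin.sum_univ_six]
  field_simp
  ring

lemma h11Gram_isSymm (a : ℝ) : (h11Gram a).IsSymm := by
  ext i j; fin_cases i <;> fin_cases j <;> simp [h11Gram]

lemma h11Gram_nondegenerate {a : ℝ} (ha : a ≠ 0) : (h11Gram a).Nondegenerate := by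
  refine SeparatingRight.nondegenerate (separatingRight_iff_forall_mulVec_eq_zero.2 fun v hv => ?_)
  have h := congrFun hv
  simp only [h11Gram, mulVec, dotProduct, Fin.sum_univ_six] at h
  have h0 := h 0; have h1 := h 1; have h2 := h 2; have h3 := h 3; have h4 := h 4; have h5 := h 5
  simp [ha] at h0 h1 h2 h3 h4 h5
  have h3' : v 3 = 0 := by simpa [h4, ha] using h3
  have h4' : v 4 = 0 := by simpa [h3', ha] using h0
  ext i; fin_cases i <;> simp [*]

section Coordinates

variable (D : (Fin 6 → ℝ) →ₗ[ℝ] (Fin 6 → ℝ))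

lemma isDerivB_h11Bracket_coords (hD : IsDerivB h11Bracket D) :
    D (𝐞 3) 3 = D (𝐞 0) 0 + D (𝐞 1) 1 ∧ D (𝐞 3) 4 = D (𝐞 1) 2 ∧
      D (𝐞 4) 4 = D (𝐞 0) 0 + D (𝐞 2) 2 := by
  have h01 := congrFun (hD (𝐞 0) (𝐞 1))
  have h02 := congrFun (hD (𝐞 0) (𝐞 2))
  exact ⟨by simpa [h11Bracket] using h01 3, by simpa [h11Bracket] using h01 4,
    by simpa [h11Bracket] using h02 4⟩

lemma commute_h11J_coords {a : ℝ} (ha : a ≠ 0)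
    (hDJ : D ∘ₗ toLin' (h11J a) = toLin' (h11J a) ∘ₗ D) :
    D (𝐞 1) 1 = D (𝐞 0) 0 ∧ a⁻¹ * D (𝐞 1) 2 = -(2 * a / 3) * D (𝐞 0) 3 ∧
      3 / (2 * a) * D (𝐞 3) 4 + 3 / a * D (𝐞 4) 4 = 3 / a * D (𝐞 2) 2 - 2 * a * D (𝐞 2) 5 := by
  have hJ0 : toLin' (h11J a) (𝐞 0) = a⁻¹ • 𝐞 1 := by ext k; fin_cases k <;> simp [h11J]
  have hJ2 : toLin' (h11J a) (𝐞 2) = (3 / (2 * a)) • (𝐞 3) + (3 / a) • 𝐞 4 := by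
    ext k; fin_cases k <;> simp [h11J]
  have h0 := congrFun (LinearMap.congr_fun hDJ (𝐞 0))
  have h2 := congrFun (LinearMap.congr_fun hDJ (𝐞 2))
  simp only [LinearMap.comp_apply, hJ0, hJ2, map_add, map_smul, toLin'_apply] at h0 h2
  have e01 := h0 1
  have e02 := h0 2
  have e24 := h2 4
  simp [h11J, mulVec, dotProduct, Fin.sum_univ_six, ha] at e01 e02 e24
  exact ⟨e01, by linear_combination e02, by linear_combination e24⟩

lemma h11Gram_coords {a : ℝ} (hD : ∀ x y, toBilin' (h11Gram a) (D x) y +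
      toBilin' (h11Gram a) x (D y) = 2 * toBilin' (h11Gram a) x y) :
    -a * D (𝐞 2) 5 - 3 / (4 * a) * D (𝐞 1) 2 = 0 ∧
      D (𝐞 3) 3 / a - D (𝐞 3) 4 / (2 * a) + D (𝐞 0) 0 / a - a / 3 * D (𝐞 0) 3 = 2 / a := by
  have h12 := hD (𝐞 1) (𝐞 2)
  have h03 := hD (𝐞 0) (𝐞 3)
  simp [h11Gram, toBilin'_apply', mulVec, dotProduct, Fin.sum_univ_six] at h12 h03
  exact ⟨by linear_combination h12, by linear_combination h03⟩

theorem h11_no_derivation {a : ℝ} (ha : a ≠ 0) (hD : IsDerivB h11Bracket D)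
    (hDJ : D ∘ₗ toLin' (h11J a) = toLin' (h11J a) ∘ₗ D)
    (hg : ∀ x y, toBilin' (h11Gram a) (D x) y + toBilin' (h11Gram a) x (D y) =
      2 * toBilin' (h11Gram a) x y) : False := by
  obtain ⟨d33, d43, d44⟩ := isDerivB_h11Bracket_coords D hD
  obtain ⟨d11, d21, hJe2⟩ := commute_h11J_coords D ha hDJ
  obtain ⟨g12, g03⟩ := h11Gram_coords D hg
  have d00 : D (𝐞 0) 0 = 0 := by
    have h : 3 / a * D (𝐞 0) 0 = 0 := by
      linear_combination hJe2 - 3 / (2 * a) * d43 - 3 / a * d44 + 2 * g12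
    exact (mul_eq_zero.1 h).resolve_left (div_ne_zero three_ne_zero ha)
  rw [d33, d11, d00, d43] at g03
  have h : 2 / a = 0 := by linear_combination -g03 - d21 / 2
  exact div_ne_zero two_ne_zero ha h

end Coordinates

/-- the Lie algebra `𝔥₁₁ = (0, 0, 0, e¹², e¹³, e¹⁴ - e²³)` with the
pseudo-Kähler structure `(J, ω₂)` of Smolentsev admits no derivation `D` with
`D∘J = J∘D` and `D + D* = 2·id`.  Here `e i = Pi.single i 1` for `i : Fin 6`
represents `e_{i+1}`. -/
theorem h11_does_not_extend
    (a : ℝ) (ha : a ≠ 0)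
    (br : (Fin 6 → ℝ) →ₗ[ℝ] (Fin 6 → ℝ) →ₗ[ℝ] (Fin 6 → ℝ))
    (hbr : IsLieBracket br)
    -- nonzero brackets: [e₁,e₂] = e₄, [e₁,e₃] = e₅, [e₁,e₄] = e₆, [e₂,e₃] = -e₆
    (h01 : br (Pi.single 0 1) (Pi.single 1 1) = Pi.single 3 1)
    (h02 : br (Pi.single 0 1) (Pi.single 2 1) = Pi.single 4 1)
    (h03 : br (Pi.single 0 1) (Pi.single 3 1) = Pi.single 5 1)
    (h12 : br (Pi.single 1 1) (Pi.single 2 1) = - Pi.single 5 1)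
    -- all other brackets of basis elements vanish
    (h04 : br (Pi.single 0 1) (Pi.single 4 1) = 0)
    (h05 : br (Pi.single 0 1) (Pi.single 5 1) = 0)
    (h13 : br (Pi.single 1 1) (Pi.single 3 1) = 0)
    (h14 : br (Pi.single 1 1) (Pi.single 4 1) = 0)
    (h15 : br (Pi.single 1 1) (Pi.single 5 1) = 0)
    (h23 : br (Pi.single 2 1) (Pi.single 3 1) = 0)
    (h24 : br (Pi.single 2 1) (Pi.single 4 1) = 0)
    (h25 : br (Pi.single 2 1) (Pi.single 5 1) = 0)
    (h34 : br (Pi.single 3 1) (Pi.single 4 1) = 0)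
    (h35 : br (Pi.single 3 1) (Pi.single 5 1) = 0)
    (h45 : br (Pi.single 4 1) (Pi.single 5 1) = 0)
    -- the complex structure J
    (J : (Fin 6 → ℝ) →ₗ[ℝ] (Fin 6 → ℝ))
    (hJ0 : J (Pi.single 0 1) = a⁻¹ • (Pi.single 1 1 : Fin 6 → ℝ))
    (hJ1 : J (Pi.single 1 1) = - a • (Pi.single 0 1 : Fin 6 → ℝ))
    (hJ2 : J (Pi.single 2 1) = (3 / (2 * a)) • (Pi.single 3 1 : Fin 6 → ℝ)
        + (3 / a) • (Pi.single 4 1 : Fin 6 → ℝ))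
    (hJ3 : J (Pi.single 3 1) = - (2 * a / 3) • (Pi.single 2 1 : Fin 6 → ℝ)
        - a⁻¹ • (Pi.single 5 1 : Fin 6 → ℝ))
    (hJ4 : J (Pi.single 4 1) = (1 / (2 * a)) • (Pi.single 5 1 : Fin 6 → ℝ))
    (hJ5 : J (Pi.single 5 1) = - (2 * a) • (Pi.single 4 1 : Fin 6 → ℝ))
    -- the symplectic form ω = e^{16} + e^{24} - (1/2) e^{25} + (1/2) e^{34}
    (ω : LinearMap.BilinForm ℝ (Fin 6 → ℝ))
    (hωalt : ∀ x y, ω x y = - ω y x)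
    (hω05 : ω (Pi.single 0 1) (Pi.single 5 1) = 1)
    (hω13 : ω (Pi.single 1 1) (Pi.single 3 1) = 1)
    (hω14 : ω (Pi.single 1 1) (Pi.single 4 1) = - (1/2))
    (hω23 : ω (Pi.single 2 1) (Pi.single 3 1) = 1/2)
    (hω01 : ω (Pi.single 0 1) (Pi.single 1 1) = 0)
    (hω02 : ω (Pi.single 0 1) (Pi.single 2 1) = 0)
    (hω03 : ω (Pi.single 0 1) (Pi.single 3 1) = 0)
    (hω04 : ω (Pi.single 0 1) (Pi.single 4 1) = 0)
    (hω12 : ω (Pi.single 1 1) (Pi.single 2 1) = 0)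
    (hω15 : ω (Pi.single 1 1) (Pi.single 5 1) = 0)
    (hω24 : ω (Pi.single 2 1) (Pi.single 4 1) = 0)
    (hω25 : ω (Pi.single 2 1) (Pi.single 5 1) = 0)
    (hω34 : ω (Pi.single 3 1) (Pi.single 4 1) = 0)
    (hω35 : ω (Pi.single 3 1) (Pi.single 5 1) = 0)
    (hω45 : ω (Pi.single 4 1) (Pi.single 5 1) = 0)
    -- the metric g(x,y) = -ω(x, Jy)
    (gm : LinearMap.BilinForm ℝ (Fin 6 → ℝ))
    (hgm : ∀ x y, gm x y = - ω x (J y)) :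
    -- g is symmetric and nondegenerate, and there is no derivation D with
    -- D∘J = J∘D and D + D* = 2·id
    (∀ x y, gm x y = gm y x) ∧ gm.Nondegenerate ∧
    ¬ ∃ (D Dstar : (Fin 6 → ℝ) →ₗ[ℝ] (Fin 6 → ℝ)),
        IsDerivB br D ∧
        (∀ x y, gm (D x) y = gm x (Dstar y)) ∧
        D ∘ₗ J = J ∘ₗ D ∧
        D + Dstar = (2:ℝ) • (LinearMap.id : (Fin 6 → ℝ) →ₗ[ℝ] (Fin 6 → ℝ)) := by
  have hbr' : br = h11Bracket := LinearMap.ext_of_antisymm hbr.1 h11Bracket_antisymm <| by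
    intro i j hij
    fin_cases i <;> fin_cases j <;> simp at hij ⊢ <;> ext k <;> fin_cases k <;>
      simp [h11Bracket, h01, h02, h03, h04, h05, h12, h13, h14, h15, h23, h24, h25, h34, h35, h45]
  have hω' : ω = h11Omega := LinearMap.ext_of_antisymm hωalt h11Omega_antisymm <| by
    intro i j hij
    fin_cases i <;> fin_cases j <;> simp at hij ⊢ <;>
      simp [h11Omega, hω01, hω02, hω03, hω04, hω05, hω12, hω13, hω14, hω15, hω23, hω24, hω25,
        hω34, hω35, hω45]
  have hJ' : J = toLin' (h11J a) := (Pi.basisFun ℝ (Fin 6)).ext fun i => by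
    rw [Pi.basisFun_apply, toLin'_apply, mulVec_single_one]
    fin_cases i
    all_goals simp only [Fin.zero_eta, Fin.mk_one, Fin.reduceFinMk, hJ0, hJ1, hJ2, hJ3, hJ4, hJ5]
    all_goals ext k; fin_cases k <;> simp [h11J]
  have hgm' : gm = toBilin' (h11Gram a) :=
    LinearMap.ext₂ fun x y => by rw [hgm, hω', hJ', neg_h11Omega_h11J ha]
  subst hbr' hJ' hgm'
  refine ⟨(isSymm_toBilin'_iff_isSymm.2 (h11Gram_isSymm a)).eq,
    (h11Gram_nondegenerate ha).toBilin', ?_⟩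
  rintro ⟨D, Dstar, hD, hadj, hDJ, hsum⟩
  exact h11_no_derivation D ha hD hDJ (apply_add_apply_eq_of_add_adjoint 2 hadj hsum)
end
end
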